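/- For every integer n ≥ 2, q_{SO}(n) = 1 + q(n). -/

import Mathlib

/-!
A non-constant polynomial map `S^n → SO(r + 1)` has a non-constant column, which is a polynomial
map `S^n → S^r`; and `SO(1)` is a point. Conversely, a non-constant polynomial map `F : S^n → S^r`
yields `v ↦ H e * H (F v) ∈ SO(r + 1)`, where `H u = 1 - 2 u uᵀ` is the Householder reflection
and `e` is a fixed unit vector. Since `H u = H w` only for `w = ±u`, this map could only be
constant if `F` took its values in a two-point set, which the connectedness of `S^n` (`n ≥ 1`)
rules out.
-/

open MvPolynomial Matrix

noncomputable section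

/-- The unit sphere `S^n ⊂ ℝ^{n+1}`, as the set of points with sum of squared coordinates 1. -/
def sphereSet (n : ℕ) : Set (Fin (n + 1) → ℝ) := {x | ∑ i, x i ^ 2 = 1}

/-- Each component of `F` is (the evaluation of) a real polynomial. -/
def IsPolyFun {n m : ℕ} (F : (Fin n → ℝ) → (Fin m → ℝ)) : Prop :=
  ∀ j, ∃ p : MvPolynomial (Fin n) ℝ, ∀ x, F x j = eval x p

/-- A polynomial map `S^n → S^r`: a polynomial map `ℝ^{n+1} → ℝ^{r+1}` sending the sphere to
the sphere. -/
def IsSpherePolyMap (n r : ℕ) (F : (Fin (n + 1) → ℝ) → (Fin (r + 1) → ℝ)) : Prop :=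
  IsPolyFun F ∧ ∀ x ∈ sphereSet n, F x ∈ sphereSet r

/-- `F` is non-constant on the set `s`. -/
def NonconstOn {α β : Type*} (s : Set α) (F : α → β) : Prop :=
  ∃ x ∈ s, ∃ y ∈ s, F x ≠ F y

/-- There exists a polynomial map `S^n → S^r` which is non-constant on `S^n`. -/
def ExistsNonconstPolyMap (n r : ℕ) : Prop :=
  ∃ F : (Fin (n + 1) → ℝ) → (Fin (r + 1) → ℝ),
    IsSpherePolyMap n r F ∧ NonconstOn (sphereSet n) F

/-- `q n` is the least `r ≥ 1` for which there exists a non-constant polynomial map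
`S^n → S^r`. -/
def q (n : ℕ) : ℕ := sInf {r | 1 ≤ r ∧ ExistsNonconstPolyMap n r}
/-- There exists a non-constant polynomial map `S^n → SO(r)`: a matrix-valued map with
polynomial entries, taking special orthogonal values on the sphere, non-constant there. -/
def ExistsNonconstPolyMapSO (n r : ℕ) : Prop :=
  ∃ P : (Fin (n + 1) → ℝ) → Matrix (Fin r) (Fin r) ℝ,
    (∀ i j : Fin r, ∃ p : MvPolynomial (Fin (n + 1)) ℝ, ∀ v, P v i j = eval v p) ∧
    (∀ v ∈ sphereSet n, (P v)ᵀ * P v = 1 ∧ (P v).det = 1) ∧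
    NonconstOn (sphereSet n) P

/-- `q_SO(n)`: the least `r ≥ 1` admitting a non-constant polynomial map `S^n → SO(r)`. -/
def qSO (n : ℕ) : ℕ := sInf {r | 1 ≤ r ∧ ExistsNonconstPolyMapSO n r}

namespace Matrix

variable {ι R : Type*} [DecidableEq ι] [CommRing R]

def householder (u : ι → R) : Matrix ι ι R :=
  1 - (2 : R) • vecMulVec u u

theorem householder_map {S : Type*} [CommRing S] (f : R →+* S) (u : ι → R) :
    (householder u).map f = householder (f ∘ u) := by
  ext i j
  simp [householder, Matrix.one_apply, vecMulVec_apply, apply_ite f, map_ofNat]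

theorem transpose_householder (u : ι → R) : (householder u)ᵀ = householder u := by
  simp [householder, transpose_vecMulVec]

variable [Fintype ι]

theorem householder_mul_self {u : ι → R} (hu : u ⬝ᵥ u = 1) :
    householder u * householder u = 1 := by
  simp only [householder, sub_mul, mul_sub, Matrix.one_mul, Matrix.mul_one, smul_mul_smul_comm,
    vecMulVec_mul_vecMulVec, hu, one_smul, Matrix.mul_smul]
  module

theorem det_householder {u : ι → R} (hu : u ⬝ᵥ u = 1) : (householder u).det = -1 := by
  rw [householder, sub_eq_add_neg, ← neg_smul, ← vecMulVec_smul, vecMulVec_eq Unit,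
    det_one_add_replicateCol_mul_replicateRow, smul_dotProduct, hu]
  norm_num

theorem eq_or_eq_neg_of_householder_eq {K : Type*} [Field K] [NeZero (2 : K)] {u w : ι → K}
    (hu : u ⬝ᵥ u = 1) (hw : w ⬝ᵥ w = 1) (h : householder u = householder w) :
    u = w ∨ u = -w := by
  have hvv : vecMulVec u u = vecMulVec w w :=
    smul_right_injective _ two_ne_zero (sub_right_injective h)
  have hwu : w = (u ⬝ᵥ w) • u := by
    simpa [vecMulVec_mulVec, hw] using congrArg (· *ᵥ w) hvv.symm
  have hsq : (u ⬝ᵥ w) * (u ⬝ᵥ w) = 1 := by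
    rw [← hw]
    conv_rhs => rw [hwu]
    simp [smul_dotProduct, dotProduct_smul, hu]
  rcases mul_self_eq_one_iff.mp hsq with h1 | h1
  · exact Or.inl (by simpa [h1] using hwu.symm)
  · exact Or.inr (by rw [hwu, h1]; simp)

end Matrix

theorem mem_sphereSet_iff_dotProduct_self {n : ℕ} {x : Fin (n + 1) → ℝ} :
    x ∈ sphereSet n ↔ x ⬝ᵥ x = 1 := by
  simp [sphereSet, dotProduct, sq]

theorem sphereSet_eq_image_sphere (n : ℕ) :
    sphereSet n = EuclideanSpace.equiv (Fin (n + 1)) ℝ '' Metric.sphere 0 1 := by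
  rw [EuclideanSpace.sphere_zero_eq _ zero_le_one, ContinuousLinearEquiv.image_eq_preimage_symm]
  ext x
  simp [sphereSet]

theorem isConnected_sphereSet {n : ℕ} (hn : 1 ≤ n) : IsConnected (sphereSet n) := by
  rw [sphereSet_eq_image_sphere]
  refine (isConnected_sphere ?_ 0 zero_le_one).image _
    (ContinuousLinearEquiv.continuous _).continuousOn
  rw [← Module.finrank_eq_rank, finrank_euclideanSpace_fin]
  exact_mod_cast (by omega : 1 < n + 1)

theorem single_mem_sphereSet (n : ℕ) : (Pi.single 0 1 : Fin (n + 1) → ℝ) ∈ sphereSet n := by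
  simp [mem_sphereSet_iff_dotProduct_self]

theorem IsPolyFun.continuous {n m : ℕ} {F : (Fin n → ℝ) → (Fin m → ℝ)} (hF : IsPolyFun F) :
    Continuous F := by
  refine continuous_pi fun j => ?_
  obtain ⟨p, hp⟩ := hF j
  simpa only [hp] using MvPolynomial.continuous_eval p

theorem NonconstOn.householder_comp {X ι K : Type*} [TopologicalSpace X] [Fintype ι]
    [DecidableEq ι] [Field K] [NeZero (2 : K)] [TopologicalSpace K] [T1Space K]
    {S : Set X} (hS : IsPreconnected S) {F : X → ι → K} (hF : ContinuousOn F S)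
    (hunit : ∀ x ∈ S, F x ⬝ᵥ F x = 1) (h : NonconstOn S F) :
    NonconstOn S (householder ∘ F) := by
  obtain ⟨x, hx, y, hy, hne⟩ := h
  rw [NonconstOn]
  by_contra! hconst
  refine hne (hS.constant_of_mapsTo (T := {F y, -F y}) (Set.toFinite _).isDiscrete hF
    (fun z hz => ?_) hx hy)
  exact eq_or_eq_neg_of_householder_eq (hunit z hz) (hunit y hy) (hconst z hz y hy)

theorem ExistsNonconstPolyMapSO.existsNonconstPolyMap {n r : ℕ}
    (h : ExistsNonconstPolyMapSO n (r + 1)) : ExistsNonconstPolyMap n r := by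
  obtain ⟨P, hpoly, hSO, x, hx, y, hy, hne⟩ := h
  obtain ⟨j, hj⟩ : ∃ j, (fun i => P x i j) ≠ (fun i => P y i j) := by
    by_contra! hcol
    exact hne (Matrix.ext fun i j => congrFun (hcol j) i)
  refine ⟨fun v i => P v i j, ⟨fun i => hpoly i j, fun v hv => ?_⟩, x, hx, y, hy, hj⟩
  simpa [sphereSet, Matrix.mul_apply, sq] using congrFun (congrFun (hSO v hv).1 j) j

theorem not_existsNonconstPolyMapSO_one (n : ℕ) : ¬ ExistsNonconstPolyMapSO n 1 := by
  rintro ⟨P, -, hSO, x, hx, y, hy, hne⟩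
  have hone : ∀ v ∈ sphereSet n, P v = 1 := fun v hv => by
    ext i j
    fin_cases i; fin_cases j
    simpa [Matrix.det_fin_one] using (hSO v hv).2
  exact hne ((hone x hx).trans (hone y hy).symm)

theorem ExistsNonconstPolyMap.existsNonconstPolyMapSO {n r : ℕ} (hn : 1 ≤ n)
    (h : ExistsNonconstPolyMap n r) : ExistsNonconstPolyMapSO n (r + 1) := by
  obtain ⟨F, ⟨hFpoly, hFsphere⟩, hFnc⟩ := h
  have hFcont := hFpoly.continuous
  choose p hp using hFpoly
  set e : Fin (r + 1) → ℝ := Pi.single 0 1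
  have he : e ⬝ᵥ e = 1 := mem_sphereSet_iff_dotProduct_self.mp (single_mem_sphereSet r)
  have hF : ∀ v ∈ sphereSet n, F v ⬝ᵥ F v = 1 := fun v hv =>
    mem_sphereSet_iff_dotProduct_self.mp (hFsphere v hv)
  set Q := householder (C ∘ e) * householder p
  have hQ : ∀ v, householder e * householder (F v) = Q.map (eval v) := by
    intro v
    rw [Matrix.map_mul, householder_map, householder_map]
    congr 2 <;> ext j <;> simp [hp]
  refine ⟨fun v => householder e * householder (F v), fun i j => ⟨Q i j, fun v => ?_⟩,
    fun v hv => ⟨?_, ?_⟩, ?_⟩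
  · exact congrFun (congrFun (hQ v) i) j
  · rw [transpose_mul, transpose_householder, transpose_householder, Matrix.mul_assoc,
      ← Matrix.mul_assoc (householder e), householder_mul_self he, Matrix.one_mul,
      householder_mul_self (hF v hv)]
  · rw [det_mul, det_householder he, det_householder (hF v hv)]
    norm_num
  · obtain ⟨x, hx, y, hy, hne⟩ := hFnc.householder_comp (isConnected_sphereSet hn).isPreconnected
      hFcont.continuousOn hF
    refine ⟨x, hx, y, hy, fun hxy => hne ?_⟩
    simpa [← Matrix.mul_assoc, householder_mul_self he] using congrArg (householder e * ·) hxy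

theorem existsNonconstPolyMap_self (n : ℕ) : ExistsNonconstPolyMap n n := by
  refine ⟨id, ⟨fun j => ⟨X j, fun x => (eval_X j).symm⟩, fun x hx => hx⟩,
    Pi.single 0 1, single_mem_sphereSet n, -Pi.single 0 1, ?_, ?_⟩
  · simp [mem_sphereSet_iff_dotProduct_self]
  · intro h
    have := congrFun h 0
    norm_num at this

theorem existsNonconstPolyMapSO_succ_iff {n r : ℕ} (hn : 1 ≤ n) :
    ExistsNonconstPolyMapSO n (r + 1) ↔ 1 ≤ r ∧ ExistsNonconstPolyMap n r := by
  refine ⟨fun h => ⟨?_, h.existsNonconstPolyMap⟩, fun h => h.2.existsNonconstPolyMapSO hn⟩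
  rcases r with _ | r
  · exact absurd h (not_existsNonconstPolyMapSO_one n)
  · omega

/-- For every `n ≥ 2`, `q_SO(n) = 1 + q(n)`. -/
theorem qSO_eq (n : ℕ) (hn : 2 ≤ n) : qSO n = 1 + q n := by
  have hn1 : 1 ≤ n := by omega
  have hsets : {r | 1 ≤ r + 1 ∧ ExistsNonconstPolyMapSO n (r + 1)} =
      {r | 1 ≤ r ∧ ExistsNonconstPolyMap n r} := by
    ext r
    simp [existsNonconstPolyMapSO_succ_iff hn1]
  have hpos : 1 ≤ qSO n :=
    le_csInf ⟨n + 1, by simp, (existsNonconstPolyMapSO_succ_iff hn1).mpr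
      ⟨hn1, existsNonconstPolyMap_self n⟩⟩ fun _ hr => hr.1
  rw [qSO, ← Nat.sInf_add hpos, hsets, ← q, add_comm]
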